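/- Correctness of the reduction showing fallback voting resistant to constructive control by adding candidates: let (C,V) be the fallback voting election obtained by Construction 1 from a Hitting Set instance (B,S,k). Then S has a hitting set of size at most k if and only if there exists a set D' ⊆ B with ||D'|| ≤ k such that w is the unique FV winner of the restricted election ({c,d,w} ∪ D', V). -/

import Mathlib

/-!
Fallback voting (Brams and Sanver).  A vote is represented by the list of the
candidates the voter approves of, in order of preference (most preferred
first); all candidates not occurring in the list are disapproved.  The voter
collection is a multiset of such votes.
-/

namespace FV

variable {α : Type} [DecidableEq α]

/-- The level-`i` score of candidate `c` in the election with votes `V`: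
the number of voters who approve of `c` and rank `c` among their top `i`
approved candidates. -/
def levelScore (V : Multiset (List α)) (i : ℕ) (c : α) : ℕ :=
  (V.filter (fun v => c ∈ v.take i)).card

/-- The approval score of candidate `c`: the number of voters approving of `c`. -/
def apprScore (V : Multiset (List α)) (c : α) : ℕ :=
  (V.filter (fun v => c ∈ v)).card

/-- Restriction of the votes to the candidate set `C`: each voter's approval
set and ranking are restricted to `C`. -/
def restrict (C : Finset α) (V : Multiset (List α)) : Multiset (List α) :=
  V.map (fun v => v.filter (fun x => decide (x ∈ C)))

instance instDecMaj (C : Finset α) (V : Multiset (List α)) :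
    DecidablePred (fun i =>
      i ∈ Finset.Icc 1 C.card ∧ ∃ c ∈ C, 2 * levelScore V i c > Multiset.card V) :=
  fun _ => inferInstance

/-- The set of fallback-voting winners of the election `(C,V)`:
if some level `i` with `1 ≤ i ≤ ‖C‖` exists at which some candidate of `C`
has a strict majority (level-`i` score exceeding `‖V‖/2`), then the winners
are the candidates with the largest level-`i₀` score, where `i₀` is the
smallest such level; otherwise the winners are the candidates with the largest
approval score. -/
def winners (C : Finset α) (V : Multiset (List α)) : Finset α :=
  if h : ∃ i, i ∈ Finset.Icc 1 C.card ∧ ∃ c ∈ C, 2 * levelScore V i c > Multiset.card V then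
    C.filter (fun c => ∀ d ∈ C, levelScore V (Nat.find h) d ≤ levelScore V (Nat.find h) c)
  else
    C.filter (fun c => ∀ d ∈ C, apprScore V d ≤ apprScore V c)

/-- The FV winners of the election `(C,V)` restricted to the candidate set `C`. -/
def fwinners (C : Finset α) (V : Multiset (List α)) : Finset α :=
  winners C (restrict C V)

end FV

/-! ### Construction 1 from a Hitting Set instance `(B, S, k)` -/

/-- Candidates of Construction 1: the elements of `B = {b_0, …, b_{m-1}}`
together with the three candidates `c`, `d`, and `w`. -/
inductive CandA (m : ℕ) where
  | b (j : Fin m)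
  | c
  | d
  | w
deriving DecidableEq

/-- The elements of a subset `T ⊆ B`, ranked according to the fixed linear
order on `B`. -/
def blistA {m : ℕ} (T : Finset (Fin m)) : List (CandA m) :=
  (T.sort (· ≤ ·)).map CandA.b

/-- The candidate set `C = B ∪ {c, d, w}` of Construction 1. -/
def CA (m : ℕ) : Finset (CandA m) :=
  (Finset.univ : Finset (Fin m)).image CandA.b ∪ {CandA.c, CandA.d, CandA.w}

/-- The voter collection of Construction 1:
`2m+1` voters `c | B∪{d,w}`; `2n+2k(n−1)+3` voters `c w | B∪{d}`;
`2n(k+1)+5` voters `w c | B∪{d}`; for each `i`, `2(k+1)` voters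
`d S_i c | (B−S_i)∪{w}`; for each `j`, two voters `d b_j w | (B−{b_j})∪{c}`;
and `2(k+1)` voters `d w c | B`. -/
def VA (m n k : ℕ) (S : Fin n → Finset (Fin m)) : Multiset (List (CandA m)) :=
  Multiset.replicate (2*m+1) [CandA.c] +
  Multiset.replicate (2*n + 2*k*(n-1) + 3) [CandA.c, CandA.w] +
  Multiset.replicate (2*n*(k+1) + 5) [CandA.w, CandA.c] +
  (∑ i : Fin n, Multiset.replicate (2*(k+1)) ([CandA.d] ++ blistA (S i) ++ [CandA.c])) +
  (∑ j : Fin m, Multiset.replicate 2 [CandA.d, CandA.b j, CandA.w]) +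
  Multiset.replicate (2*(k+1)) [CandA.d, CandA.w, CandA.c]

/-!
In the election restricted to `{c,d,w} ∪ D'` nobody has a strict majority at level 1, while `c`
has one at level 2, so the FV winners are the candidates with the largest level-2 score; `d` and
the spoilers stay below `w` there as long as `‖D'‖ ≤ k`. At level 2, `w` leads `c` by
`2k + 1 - 2‖D'‖ - 2(k+1)t`, where `t` is the number of sets `S_i` missed by `D'`: each spoiler
`b_j` pushes `w` to third place in the two votes `d b_j w`, and each missed `S_i` lifts `c` to
second place in the `2(k+1)` votes `d S_i c`. For `‖D'‖ ≤ k` this lead is positive exactly when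
`t = 0`.
-/

theorem Finset.sort_filter {β : Type*} [LinearOrder β] (s : Finset β) (p : β → Prop)
    [DecidablePred p] : (s.filter p).sort = s.sort.filter p := by
  refine List.Perm.eq_of_pairwise' (Finset.pairwise_sort _ _)
    ((Finset.pairwise_sort _ _).filter _) ?_
  rw [List.perm_ext_iff_of_nodup (Finset.sort_nodup _ _) ((Finset.sort_nodup _ _).filter _)]
  exact fun a => by simp

theorem Finset.filter_isMax_eq_singleton_iff {α β : Type*} [DecidableEq α] [LinearOrder β]
    {s : Finset α} {f : α → β} {w : α} (hw : w ∈ s) :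
    s.filter (fun x => ∀ y ∈ s, f y ≤ f x) = {w} ↔ ∀ x ∈ s, x ≠ w → f x < f w := by
  constructor
  · intro h x hx hxw
    have hw_max : ∀ y ∈ s, f y ≤ f w := (Finset.mem_filter.1 (h ▸ Finset.mem_singleton_self w)).2
    by_contra! hwx
    have hx_max : x ∈ s.filter (fun x => ∀ y ∈ s, f y ≤ f x) :=
      Finset.mem_filter.2 ⟨hx, fun y hy => (hw_max y hy).trans hwx⟩
    exact hxw (Finset.mem_singleton.1 (h ▸ hx_max))
  · intro h
    ext x
    simp only [Finset.mem_filter, Finset.mem_singleton]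
    constructor
    · rintro ⟨hx, hx_max⟩
      by_contra hxw
      exact (h x hx hxw).not_ge (hx_max w hw)
    · rintro rfl
      exact ⟨hw, fun y hy => (eq_or_ne y x).elim (fun e => e ▸ le_rfl) fun hne => (h y hy hne).le⟩

namespace FV

variable {α : Type} [DecidableEq α]

theorem levelScore_eq_countP (V : Multiset (List α)) (i : ℕ) (c : α) :
    levelScore V i c = V.countP (fun v => c ∈ v.take i) :=
  (Multiset.countP_eq_card_filter _ _).symm

@[simp] theorem levelScore_add (V W : Multiset (List α)) (i : ℕ) (c : α) :
    levelScore (V + W) i c = levelScore V i c + levelScore W i c := by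
  simp [levelScore_eq_countP]

@[simp] theorem levelScore_replicate (r : ℕ) (v : List α) (i : ℕ) (c : α) :
    levelScore (Multiset.replicate r v) i c = if c ∈ v.take i then r else 0 := by
  rw [levelScore_eq_countP, ← Multiset.coe_replicate, Multiset.coe_countP, List.countP_replicate]
  simp

@[simp] theorem levelScore_sum {ι : Type*} (s : Finset ι) (V : ι → Multiset (List α)) (i : ℕ)
    (c : α) : levelScore (∑ j ∈ s, V j) i c = ∑ j ∈ s, levelScore (V j) i c := by
  simp only [levelScore_eq_countP]
  exact map_sum (Multiset.countPAddMonoidHom _) V s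

@[simp] theorem restrict_add (C : Finset α) (V W : Multiset (List α)) :
    restrict C (V + W) = restrict C V + restrict C W :=
  Multiset.map_add _ _ _

@[simp] theorem restrict_replicate (C : Finset α) (r : ℕ) (v : List α) :
    restrict C (Multiset.replicate r v) = Multiset.replicate r (v.filter (· ∈ C)) :=
  Multiset.map_replicate _ _ _

@[simp] theorem restrict_sum {ι : Type*} (C : Finset α) (s : Finset ι)
    (V : ι → Multiset (List α)) : restrict C (∑ j ∈ s, V j) = ∑ j ∈ s, restrict C (V j) :=
  map_sum (Multiset.mapAddMonoidHom _) V s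

@[simp] theorem card_restrict (C : Finset α) (V : Multiset (List α)) :
    Multiset.card (restrict C V) = Multiset.card V :=
  Multiset.card_map _ _

theorem winners_eq_of_first_majority_level {C : Finset α} {V : Multiset (List α)} {i : ℕ}
    (hi : 1 ≤ i) (hiC : i ≤ C.card) (hmaj : ∃ c ∈ C, 2 * levelScore V i c > Multiset.card V)
    (hbelow : ∀ j, 1 ≤ j → j < i → ∀ c ∈ C, 2 * levelScore V j c ≤ Multiset.card V) :
    winners C V = C.filter (fun c => ∀ d ∈ C, levelScore V i d ≤ levelScore V i c) := by
  have hex : ∃ i, i ∈ Finset.Icc 1 C.card ∧ ∃ c ∈ C, 2 * levelScore V i c > Multiset.card V :=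
    ⟨i, Finset.mem_Icc.2 ⟨hi, hiC⟩, hmaj⟩
  have hfind : Nat.find hex = i := by
    refine (Nat.find_eq_iff hex).2 ⟨⟨Finset.mem_Icc.2 ⟨hi, hiC⟩, hmaj⟩, ?_⟩
    rintro j hji ⟨hj, c, hc, hjc⟩
    exact (hbelow j (Finset.mem_Icc.1 hj).1 hji c hc).not_gt hjc
  rw [winners, dif_pos hex, hfind]

end FV

namespace CandA

variable {m n k : ℕ}

def withSpoilers (D' : Finset (Fin m)) : Finset (CandA m) :=
  {c, d, w} ∪ D'.image b

variable (D' : Finset (Fin m))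

@[simp] theorem c_mem_withSpoilers : c ∈ withSpoilers D' := by simp [withSpoilers]
@[simp] theorem d_mem_withSpoilers : d ∈ withSpoilers D' := by simp [withSpoilers]
@[simp] theorem w_mem_withSpoilers : w ∈ withSpoilers D' := by simp [withSpoilers]
@[simp] theorem b_mem_withSpoilers {j : Fin m} : b j ∈ withSpoilers D' ↔ j ∈ D' := by
  simp [withSpoilers]

theorem three_le_card_withSpoilers : 3 ≤ (withSpoilers D').card :=
  (Finset.card_le_card Finset.subset_union_left).trans' (by simp)

theorem blistA_filter_mem_withSpoilers (T : Finset (Fin m)) :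
    (blistA T).filter (· ∈ withSpoilers D') = blistA (T ∩ D') := by
  rw [blistA, blistA, List.filter_map, ← Finset.filter_mem_eq_inter, Finset.sort_filter]
  simp [Function.comp_def]

@[simp] theorem c_notMem_blistA (T : Finset (Fin m)) : c ∉ blistA T := by simp [blistA]
@[simp] theorem w_notMem_blistA (T : Finset (Fin m)) : w ∉ blistA T := by simp [blistA]

@[simp] theorem blistA_eq_nil {T : Finset (Fin m)} : blistA T = [] ↔ T = ∅ := by
  rw [← List.length_eq_zero_iff, blistA, List.length_map, Finset.length_sort, Finset.card_eq_zero]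

theorem c_mem_take_one_blistA_append_iff (T : Finset (Fin m)) :
    c ∈ (blistA T ++ [c]).take 1 ↔ T = ∅ := by
  rw [← blistA_eq_nil]
  rcases h : blistA T with _ | ⟨x, l⟩
  · simp
  · have hx : x ≠ c := fun hxc => c_notMem_blistA T (h ▸ hxc ▸ List.mem_cons_self)
    simp [hx.symm]

@[simp] theorem w_notMem_take_blistA_append (T : Finset (Fin m)) (i : ℕ) :
    w ∉ (blistA T ++ [c]).take i := fun h => by simpa using List.mem_of_mem_take h

variable (S : Fin n → Finset (Fin m))

theorem card_VA :
    Multiset.card (VA m n k S)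
      = (2*m+1) + (2*n + 2*k*(n-1) + 3) + (2*n*(k+1) + 5) + n * (2*(k+1)) + m * 2 + 2*(k+1) := by
  simp only [VA, Multiset.card_add, Multiset.card_replicate, Multiset.card_sum]
  simp

theorem restrict_VA :
    FV.restrict (withSpoilers D') (VA m n k S) =
      Multiset.replicate (2*m+1) [c] +
      Multiset.replicate (2*n + 2*k*(n-1) + 3) [c, w] +
      Multiset.replicate (2*n*(k+1) + 5) [w, c] +
      (∑ i : Fin n, Multiset.replicate (2*(k+1)) ([d] ++ blistA (S i ∩ D') ++ [c])) +
      (∑ j : Fin m, Multiset.replicate 2 (d :: if j ∈ D' then [b j, w] else [w])) +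
      Multiset.replicate (2*(k+1)) [d, w, c] := by
  simp only [VA, FV.restrict_add, FV.restrict_replicate, FV.restrict_sum, List.filter_append,
    blistA_filter_mem_withSpoilers, List.filter_cons, List.filter_nil, c_mem_withSpoilers,
    d_mem_withSpoilers, w_mem_withSpoilers, b_mem_withSpoilers, decide_true, if_true,
    decide_eq_true_eq]

theorem levelScore_one_c :
    FV.levelScore (FV.restrict (withSpoilers D') (VA m n k S)) 1 c
      = (2*m+1) + (2*n + 2*k*(n-1) + 3) := by
  simp only [restrict_VA, FV.levelScore_add, FV.levelScore_replicate, FV.levelScore_sum]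
  simp

theorem levelScore_one_w :
    FV.levelScore (FV.restrict (withSpoilers D') (VA m n k S)) 1 w = 2*n*(k+1) + 5 := by
  simp only [restrict_VA, FV.levelScore_add, FV.levelScore_replicate, FV.levelScore_sum]
  simp

theorem levelScore_one_b (j : Fin m) :
    FV.levelScore (FV.restrict (withSpoilers D') (VA m n k S)) 1 (b j) = 0 := by
  simp only [restrict_VA, FV.levelScore_add, FV.levelScore_replicate, FV.levelScore_sum]
  simp

theorem levelScore_d {i : ℕ} (hi : 1 ≤ i) :
    FV.levelScore (FV.restrict (withSpoilers D') (VA m n k S)) i d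
      = n * (2*(k+1)) + m * 2 + 2*(k+1) := by
  obtain ⟨i, rfl⟩ := Nat.exists_eq_add_of_le' hi
  simp only [restrict_VA, FV.levelScore_add, FV.levelScore_replicate, FV.levelScore_sum]
  cases i <;> simp

theorem levelScore_two_c :
    FV.levelScore (FV.restrict (withSpoilers D') (VA m n k S)) 2 c
      = (2*m+1) + (2*n + 2*k*(n-1) + 3) + (2*n*(k+1) + 5)
        + (Finset.univ.filter fun i => S i ∩ D' = ∅).card * (2*(k+1)) := by
  simp only [restrict_VA, FV.levelScore_add, FV.levelScore_replicate, FV.levelScore_sum]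
  simp [c_mem_take_one_blistA_append_iff, apply_ite (List.take 1), mem_ite]
  rw [← Finset.sum_filter, Finset.sum_const, smul_eq_mul]

theorem levelScore_two_w :
    FV.levelScore (FV.restrict (withSpoilers D') (VA m n k S)) 2 w
      = (2*n + 2*k*(n-1) + 3) + (2*n*(k+1) + 5) + D'ᶜ.card * 2 + 2*(k+1) := by
  simp only [restrict_VA, FV.levelScore_add, FV.levelScore_replicate, FV.levelScore_sum]
  simp [apply_ite (List.take 1), mem_ite]
  rw [Finset.sum_ite, Finset.sum_const_zero, zero_add, Finset.sum_const, smul_eq_mul,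
    Finset.filter_not, Finset.filter_mem_eq_inter, Finset.univ_inter, ← Finset.compl_eq_univ_sdiff]

theorem levelScore_two_b_le (j : Fin m) :
    FV.levelScore (FV.restrict (withSpoilers D') (VA m n k S)) 2 (b j)
      ≤ n * (2*(k+1)) + m * 2 := by
  simp only [restrict_VA, FV.levelScore_add, FV.levelScore_replicate, FV.levelScore_sum]
  simp only [List.take_succ_cons, List.take_nil, List.mem_cons, reduceCtorEq, List.not_mem_nil,
    or_self, ↓reduceIte, add_zero, List.cons_append, List.nil_append, false_or, zero_add,
    List.take_zero]
  rw [← Finset.sum_filter, ← Finset.sum_filter, Finset.sum_const, Finset.sum_const, smul_eq_mul,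
    smul_eq_mul]
  gcongr <;> exact (Finset.card_le_univ _).trans_eq (Fintype.card_fin _)

theorem two_mul_levelScore_one_le_card (hn : 1 < n) :
    ∀ x ∈ withSpoilers D', 2 * FV.levelScore (FV.restrict (withSpoilers D') (VA m n k S)) 1 x
      ≤ Multiset.card (FV.restrict (withSpoilers D') (VA m n k S)) := by
  obtain ⟨q, rfl⟩ : ∃ q, n = q + 1 := ⟨n - 1, by omega⟩
  have hkq : k ≤ k * q := Nat.le_mul_of_pos_right k (by omega)
  rintro (j | _ | _ | _) -
  all_goals
    simp only [FV.card_restrict, card_VA, levelScore_one_b, levelScore_one_c, levelScore_one_w,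
      levelScore_d D' S le_rfl, Nat.add_sub_cancel]
    linarith

theorem card_lt_two_mul_levelScore_two_c (hn : 1 < n) :
    Multiset.card (FV.restrict (withSpoilers D') (VA m n k S))
      < 2 * FV.levelScore (FV.restrict (withSpoilers D') (VA m n k S)) 2 c := by
  obtain ⟨q, rfl⟩ : ∃ q, n = q + 1 := ⟨n - 1, by omega⟩
  have hkq : k ≤ k * q := Nat.le_mul_of_pos_right k (by omega)
  rw [FV.card_restrict, card_VA, levelScore_two_c, Nat.add_sub_cancel]
  linarith [Nat.zero_le ((Finset.univ.filter fun i => S i ∩ D' = ∅).card * (2*(k+1)))]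

theorem levelScore_two_c_lt_w_iff (hD' : D'.card ≤ k) :
    FV.levelScore (FV.restrict (withSpoilers D') (VA m n k S)) 2 c
        < FV.levelScore (FV.restrict (withSpoilers D') (VA m n k S)) 2 w
      ↔ ∀ i, (D' ∩ S i).Nonempty := by
  have hmissed : (Finset.univ.filter fun i => S i ∩ D' = ∅).card = 0
      ↔ ∀ i, (D' ∩ S i).Nonempty := by
    simp [Finset.filter_eq_empty_iff, Finset.nonempty_iff_ne_empty, Finset.inter_comm]
  have hm : D'ᶜ.card + D'.card = m := D'.card_compl_add_card.trans (Fintype.card_fin m)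
  rw [levelScore_two_c, levelScore_two_w, ← hmissed]
  generalize (Finset.univ.filter fun i => S i ∩ D' = ∅).card = t
  constructor
  · intro h
    by_contra ht
    have : 2 * (k + 1) ≤ t * (2 * (k + 1)) := Nat.le_mul_of_pos_left _ (Nat.pos_of_ne_zero ht)
    omega
  · rintro rfl
    omega

theorem levelScore_two_w_gt (hn : 1 < n) (hD' : D'.card ≤ k) :
    n * (2*(k+1)) + m * 2 + 2*(k+1)
      < FV.levelScore (FV.restrict (withSpoilers D') (VA m n k S)) 2 w := by
  obtain ⟨q, rfl⟩ : ∃ q, n = q + 1 := ⟨n - 1, by omega⟩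
  have hkq : k ≤ k * q := Nat.le_mul_of_pos_right k (by omega)
  have hm : D'ᶜ.card + D'.card = m := D'.card_compl_add_card.trans (Fintype.card_fin m)
  rw [levelScore_two_w, Nat.add_sub_cancel]
  linarith

theorem fwinners_withSpoilers_eq_singleton_w_iff (hn : 1 < n) (hD' : D'.card ≤ k) :
    FV.fwinners (withSpoilers D') (VA m n k S) = {w} ↔ ∀ i, (D' ∩ S i).Nonempty := by
  have hwinners := FV.winners_eq_of_first_majority_level
    (V := FV.restrict (withSpoilers D') (VA m n k S)) (i := 2) one_le_two
    ((three_le_card_withSpoilers D').trans' (by norm_num))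
    ⟨c, c_mem_withSpoilers D', card_lt_two_mul_levelScore_two_c D' S hn⟩
    (fun j hj hj2 => (by omega : j = 1) ▸ two_mul_levelScore_one_le_card D' S hn)
  rw [FV.fwinners, hwinners, Finset.filter_isMax_eq_singleton_iff (w_mem_withSpoilers D')]
  refine ⟨fun h => (levelScore_two_c_lt_w_iff D' S hD').1 (h c (by simp) (by simp)),
    fun hhit => ?_⟩
  have hw := levelScore_two_w_gt D' S hn hD'
  rintro (j | _ | _ | _) - hne
  · exact (levelScore_two_b_le D' S j).trans_lt (by omega)
  · exact (levelScore_two_c_lt_w_iff D' S hD').2 hhit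
  · exact (levelScore_d D' S one_le_two).trans_lt hw
  · exact absurd rfl hne

end CandA

theorem fv_construction1_constructive_adding_candidates_general
    (m n k : ℕ) (S : Fin n → Finset (Fin m))
    (hn : 1 < n) :
    (∃ B' : Finset (Fin m), B'.card ≤ k ∧ ∀ i, (B' ∩ S i).Nonempty) ↔
    (∃ D' : Finset (Fin m), D'.card ≤ k ∧
      FV.fwinners ({CandA.c, CandA.d, CandA.w} ∪ D'.image CandA.b) (VA m n k S)
        = {CandA.w}) :=
  exists_congr fun D' => and_congr_right fun hD' =>
    (CandA.fwinners_withSpoilers_eq_singleton_w_iff D' S hn hD').symm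

/-- Correctness of the reduction showing fallback voting resistant to
constructive control by adding candidates: for the election `(C,V)` of
Construction 1 from a Hitting Set instance `(B,S,k)` (with `n > 1`,
`0 < k < m`, and all `S_i` nonempty), `S` has a hitting set of size at most
`k` if and only if there is a set `D' ⊆ B` of spoiler candidates with
`‖D'‖ ≤ k` such that `w` is the unique FV winner of the restricted election
`({c,d,w} ∪ D', V)`. -/
theorem fv_construction1_constructive_adding_candidates
    (m n k : ℕ) (S : Fin n → Finset (Fin m))
    (hn : 1 < n) (hk : 0 < k) (hkm : k < m) (hS : ∀ i, (S i).Nonempty) :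
    (∃ B' : Finset (Fin m), B'.card ≤ k ∧ ∀ i, (B' ∩ S i).Nonempty) ↔
    (∃ D' : Finset (Fin m), D'.card ≤ k ∧
      FV.fwinners ({CandA.c, CandA.d, CandA.w} ∪ D'.image CandA.b) (VA m n k S)
        = {CandA.w}) :=
  fv_construction1_constructive_adding_candidates_general m n k S hn
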